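/- For every instance with identical unit-delay resources, the maximum cost of a Nash assignment is at most 3 times the minimum cost of a Nash assignment. -/
import Mathlib


open Finset

/-- Load of resource `ℓ` with identical unit delays: total weight assigned to `ℓ`. -/
noncomputable def uLoad {n m : ℕ} (w : Fin n → ℝ) (A : Fin n → Fin m) (ℓ : Fin m) : ℝ :=
  ∑ i ∈ univ.filter (fun i => A i = ℓ), w i

/-- Social cost with unit delays: sum of the tasks' loads. -/
noncomputable def uCost {n m : ℕ} (w : Fin n → ℝ) (A : Fin n → Fin m) : ℝ :=
  ∑ i : Fin n, uLoad w A (A i)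

lemma uLoad_nonneg {n m : ℕ} {w : Fin n → ℝ} (hw : ∀ i, 0 ≤ w i)
    (A : Fin n → Fin m) (ℓ : Fin m) : 0 ≤ uLoad w A ℓ :=
  Finset.sum_nonneg fun i _ => hw i

lemma le_uLoad {n m : ℕ} {w : Fin n → ℝ} (hw : ∀ i, 0 ≤ w i)
    {A : Fin n → Fin m} {j : Fin n} {ℓ : Fin m} (h : A j = ℓ) :
    w j ≤ uLoad w A ℓ :=
  Finset.single_le_sum (f := w) (fun i _ => hw i) (by simp [h])

lemma pair_le_uLoad {n m : ℕ} {w : Fin n → ℝ} (hw : ∀ i, 0 ≤ w i)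
    {A : Fin n → Fin m} {j₁ j₂ : Fin n} (hne : j₁ ≠ j₂) {ℓ : Fin m}
    (h₁ : A j₁ = ℓ) (h₂ : A j₂ = ℓ) : w j₁ + w j₂ ≤ uLoad w A ℓ := by
  have hsub : ({j₁, j₂} : Finset (Fin n)) ⊆ univ.filter (fun i => A i = ℓ) := by
    intro x hx
    simp only [mem_insert, mem_singleton] at hx
    rcases hx with h | h <;> simp [h, h₁, h₂]
  calc w j₁ + w j₂ = ∑ x ∈ ({j₁, j₂} : Finset (Fin n)), w x := (Finset.sum_pair hne).symm
    _ ≤ _ := Finset.sum_le_sum_of_subset_of_nonneg hsub (fun i _ _ => hw i)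

lemma sum_uLoad_eq {n m : ℕ} (w : Fin n → ℝ) (A : Fin n → Fin m) (s : Finset (Fin m)) :
    ∑ ℓ ∈ s, uLoad w A ℓ = ∑ j ∈ univ.filter (fun j => A j ∈ s), w j := by
  unfold uLoad
  exact Finset.sum_fiberwise_eq_sum_filter univ s A w

/-- Key structural lemma: the minimum load of one Nash assignment is at most twice
the load experienced by any task in another Nash assignment. -/
lemma min_le_two_uLoad {n m : ℕ} {w : Fin n → ℝ} (hw : ∀ i, 1 ≤ w i)
    (N₁ N₂ : Fin n → Fin m)
    (hN₂ : ∀ (i : Fin n) (ℓ : Fin m), uLoad w N₂ (N₂ i) ≤ uLoad w N₂ ℓ + w i)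
    (ℓ₀ : Fin m) (hℓ₀ : ∀ ℓ, uLoad w N₁ ℓ₀ ≤ uLoad w N₁ ℓ)
    (i₀ : Fin n) :
    uLoad w N₁ ℓ₀ ≤ 2 * uLoad w N₂ (N₂ i₀) := by
  classical
  have hw0 : ∀ i, 0 ≤ w i := fun i => le_trans zero_le_one (hw i)
  set u : ℝ := uLoad w N₂ (N₂ i₀) with hu_def
  set t : ℝ := uLoad w N₁ ℓ₀ with ht_def
  have ht0 : 0 ≤ t := uLoad_nonneg hw0 N₁ ℓ₀
  have hwu : w i₀ ≤ u := le_uLoad hw0 rfl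
  have hu0 : 0 ≤ u := le_trans (hw0 i₀) hwu
  -- Nash property of N₂ against machine N₂ i₀
  have key2 : ∀ j, uLoad w N₂ (N₂ j) ≤ u + w j := fun j => hN₂ j (N₂ i₀)
  -- any machine holding two distinct tasks in N₂ has load ≤ 2u
  have htwo : ∀ j₁ j₂ : Fin n, j₁ ≠ j₂ → N₂ j₁ = N₂ j₂ →
      uLoad w N₂ (N₂ j₁) ≤ 2 * u := by
    intro j₁ j₂ hne heq
    have hp : w j₁ + w j₂ ≤ uLoad w N₂ (N₂ j₁) :=
      pair_le_uLoad hw0 hne rfl heq.symm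
    have h1 := key2 j₁
    have h2 := key2 j₂
    rw [← heq] at h2
    linarith
  -- heavy tasks
  set H : Finset (Fin n) := univ.filter (fun j => 2 * u < w j) with hH_def
  have hmemH : ∀ j, j ∈ H ↔ 2 * u < w j := by
    intro j; simp [hH_def]
  -- every heavy task is alone on its N₂ machine
  have hsingle : ∀ j ∈ H, ∀ j', N₂ j' = N₂ j → j' = j := by
    intro j hj j' hj'
    by_contra hne
    have := htwo j j' (fun h => hne (h.symm)) hj'.symm
    have hload : w j ≤ uLoad w N₂ (N₂ j) := le_uLoad hw0 rfl
    have := (hmemH j).1 hj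
    linarith
  -- i₀ is light
  have hi₀ : i₀ ∉ H := by
    rw [hmemH]
    push_neg
    linarith [hw i₀]
  set Q₂ : Finset (Fin m) := H.image N₂ with hQ₂_def
  have hinj : Set.InjOn N₂ ↑H := by
    intro a ha b hb hab
    exact hsingle b (by simpa using hb) a hab
  have hcardQ₂ : Q₂.card = H.card := Finset.card_image_of_injOn hinj
  have hi₀Q₂ : N₂ i₀ ∉ Q₂ := by
    intro hmem
    rw [hQ₂_def, Finset.mem_image] at hmem
    obtain ⟨j, hj, hj2⟩ := hmem
    exact hi₀ (hsingle j hj i₀ hj2.symm ▸ hj)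
  -- H.card + 1 ≤ m
  have hHm : H.card + 1 ≤ m := by
    have hsub : insert (N₂ i₀) Q₂ ⊆ (univ : Finset (Fin m)) := Finset.subset_univ _
    have := Finset.card_le_card hsub
    rw [Finset.card_insert_of_notMem hi₀Q₂, hcardQ₂] at this
    simpa using this
  -- machines not in Q₂ have N₂-load ≤ 2u
  have hlight_mach : ∀ ℓ ∉ Q₂, uLoad w N₂ ℓ ≤ 2 * u := by
    intro ℓ hℓ
    rcases Finset.eq_empty_or_nonempty (univ.filter (fun j => N₂ j = ℓ)) with he | ⟨j, hj⟩
    · rw [uLoad, he, Finset.sum_empty]; linarith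
    · have hjℓ : N₂ j = ℓ := (Finset.mem_filter.1 hj).2
      by_cases hjH : j ∈ H
      · exact absurd (hQ₂_def ▸ Finset.mem_image_of_mem N₂ hjH) (hjℓ ▸ hℓ)
      · -- all tasks on ℓ: if another distinct task, use htwo; else singleton of light j
        by_cases hex : ∃ j', N₂ j' = ℓ ∧ j' ≠ j
        · obtain ⟨j', hj', hne⟩ := hex
          have := htwo j j' (fun h => hne h.symm) (by rw [hjℓ, hj'])
          rwa [hjℓ] at this
        · push_neg at hex
          have hfib : univ.filter (fun j' => N₂ j' = ℓ) = {j} := by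
            apply Finset.eq_singleton_iff_unique_mem.2
            exact ⟨hj, fun x hx => hex x (Finset.mem_filter.1 hx).2⟩
          have : uLoad w N₂ ℓ = w j := by rw [uLoad, hfib, Finset.sum_singleton]
          rw [this]
          have := (hmemH j).not.1 hjH
          linarith
  -- counting
  set Q₁ : Finset (Fin m) := H.image N₁ with hQ₁_def
  set F : Finset (Fin m) := univ \ Q₁ with hF_def
  have hcardF : (m : ℝ) - H.card ≤ F.card := by
    have h1 : F.card = m - Q₁.card := by
      rw [hF_def, Finset.card_sdiff_of_subset (Finset.subset_univ _)]
      simp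
    have h2 : Q₁.card ≤ H.card := Finset.card_image_le
    have h3 : Q₁.card ≤ m := h2.trans (by omega)
    rw [h1, Nat.cast_sub h3]
    have : (Q₁.card : ℝ) ≤ H.card := by exact_mod_cast h2
    linarith
  have hchain1 : ((m : ℝ) - H.card) * t ≤ ∑ ℓ ∈ F, uLoad w N₁ ℓ := by
    have h1 : ∑ ℓ ∈ F, t ≤ ∑ ℓ ∈ F, uLoad w N₁ ℓ :=
      Finset.sum_le_sum fun ℓ _ => hℓ₀ ℓ
    rw [Finset.sum_const, nsmul_eq_mul] at h1
    calc ((m : ℝ) - H.card) * t ≤ (F.card : ℝ) * t := by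
          apply mul_le_mul_of_nonneg_right hcardF ht0
      _ ≤ _ := h1
  have hchain2 : ∑ ℓ ∈ F, uLoad w N₁ ℓ ≤ ∑ j ∈ univ \ H, w j := by
    rw [sum_uLoad_eq]
    apply Finset.sum_le_sum_of_subset_of_nonneg _ (fun i _ _ => hw0 i)
    intro j hj
    rw [Finset.mem_filter] at hj
    rw [Finset.mem_sdiff]
    refine ⟨Finset.mem_univ _, fun hjH => ?_⟩
    have : N₁ j ∈ Q₁ := hQ₁_def ▸ Finset.mem_image_of_mem N₁ hjH
    have hF2 := hj.2
    rw [hF_def, Finset.mem_sdiff] at hF2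
    exact hF2.2 this
  have hchain3 : ∑ j ∈ univ \ H, w j ≤ ∑ ℓ ∈ univ \ Q₂, uLoad w N₂ ℓ := by
    rw [sum_uLoad_eq]
    apply Finset.sum_le_sum_of_subset_of_nonneg _ (fun i _ _ => hw0 i)
    intro j hj
    rw [Finset.mem_sdiff] at hj
    rw [Finset.mem_filter, Finset.mem_sdiff]
    refine ⟨Finset.mem_univ _, Finset.mem_univ _, fun hmem => ?_⟩
    rw [hQ₂_def, Finset.mem_image] at hmem
    obtain ⟨j', hj', hj'2⟩ := hmem
    exact hj.2 (hsingle j' hj' j hj'2.symm ▸ hj')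
  have hchain4 : ∑ ℓ ∈ univ \ Q₂, uLoad w N₂ ℓ ≤ ((m : ℝ) - H.card) * (2 * u) := by
    have h1 : ∑ ℓ ∈ univ \ Q₂, uLoad w N₂ ℓ ≤ ∑ ℓ ∈ univ \ Q₂, (2 * u) :=
      Finset.sum_le_sum fun ℓ hℓ => hlight_mach ℓ (Finset.mem_sdiff.1 hℓ).2
    rw [Finset.sum_const, nsmul_eq_mul] at h1
    have hc : ((univ \ Q₂).card : ℝ) = (m : ℝ) - H.card := by
      rw [Finset.card_sdiff_of_subset (Finset.subset_univ _), hcardQ₂]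
      have : H.card ≤ m := by omega
      rw [Nat.cast_sub (by simpa using this)]
      simp
    rw [hc] at h1
    exact h1
  have hpos : (0 : ℝ) < (m : ℝ) - H.card := by
    have : (H.card : ℝ) + 1 ≤ m := by exact_mod_cast hHm
    linarith
  have : ((m : ℝ) - H.card) * t ≤ ((m : ℝ) - H.card) * (2 * u) := by
    linarith [hchain1, hchain2, hchain3, hchain4]
  exact le_of_mul_le_mul_left (by linarith) hpos

/-- For every instance with identical unit-delay resources, the cost of any Nash
assignment is at most 3 times the cost of any other Nash assignment. -/
theorem nash_cost_ratio_identical_resources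
    (n m : ℕ) (hm : 0 < m) (w : Fin n → ℝ) (hw : ∀ i, 1 ≤ w i)
    (N₁ N₂ : Fin n → Fin m)
    (hN₁ : ∀ (i : Fin n) (ℓ : Fin m), uLoad w N₁ (N₁ i) ≤ uLoad w N₁ ℓ + w i)
    (hN₂ : ∀ (i : Fin n) (ℓ : Fin m), uLoad w N₂ (N₂ i) ≤ uLoad w N₂ ℓ + w i) :
    uCost w N₁ ≤ 3 * uCost w N₂ := by
  classical
  have hw0 : ∀ i, 0 ≤ w i := fun i => le_trans zero_le_one (hw i)
  obtain ⟨ℓ₀, -, hℓ₀⟩ := Finset.exists_min_image (univ : Finset (Fin m)) (uLoad w N₁)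
    ⟨⟨0, hm⟩, Finset.mem_univ _⟩
  have hℓ₀' : ∀ ℓ, uLoad w N₁ ℓ₀ ≤ uLoad w N₁ ℓ := fun ℓ => hℓ₀ ℓ (Finset.mem_univ _)
  have key : ∀ i, uLoad w N₁ (N₁ i) ≤ 3 * uLoad w N₂ (N₂ i) := by
    intro i
    have h1 : uLoad w N₁ (N₁ i) ≤ uLoad w N₁ ℓ₀ + w i := hN₁ i ℓ₀
    have h2 : uLoad w N₁ ℓ₀ ≤ 2 * uLoad w N₂ (N₂ i) :=
      min_le_two_uLoad hw N₁ N₂ hN₂ ℓ₀ hℓ₀' i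
    have h3 : w i ≤ uLoad w N₂ (N₂ i) := le_uLoad hw0 rfl
    linarith
  calc uCost w N₁ = ∑ i : Fin n, uLoad w N₁ (N₁ i) := rfl
    _ ≤ ∑ i : Fin n, 3 * uLoad w N₂ (N₂ i) := Finset.sum_le_sum fun i _ => key i
    _ = 3 * uCost w N₂ := by rw [uCost, Finset.mul_sum]
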